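/- arXiv:1912.11511 — 2 statements merged into one kernel-verified Lean document; each statement's English description precedes it below -/
import Mathlib

section
/- Let A, P, Q be n × n real matrices with P and Q symmetric positive definite, satisfying the Lyapunov equation P A + Aᵀ P = −Q. Let f : ℝ^n → ℝ^n be Lipschitz with constant ρ ≥ 0 and f(0) = 0, and suppose ρ ≤ λ_min(Q) / (2 λ_max(P)), where λ_min(Q) is the smallest eigenvalue of Q and λ_max(P) is the largest eigenvalue of P. Then for every x ∈ ℝ^n, the derivative of the Lyapunov function V(x) = ⟨x, P x⟩ along the vector field x ↦ A x + f(x) is nonpositive; quantitatively, 2⟨P x, A x + f(x)⟩ ≤ −(λ_min(Q) − 2 ρ λ_max(P)) ‖x‖² ≤ 0, where ⟨·,·⟩ and ‖·‖ are the Euclidean inner product and norm on ℝ^n. -/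
/-!
By the Lyapunov equation, `2⟪P x, A x⟫ = ⟪x, (P A + Aᵀ P) x⟫ = -⟪x, Q x⟫ ≤ -λ_min(Q) ‖x‖²`.
For the perturbation, Cauchy–Schwarz gives `⟪P x, f x⟫ ≤ ‖P x‖ ‖f x‖ ≤ λ_max(P) ‖x‖ · ρ ‖x‖`,
using `‖f x‖ = ‖f x - f 0‖ ≤ ρ ‖x‖`. Both eigenvalue bounds come from expanding `x` in an
orthonormal eigenbasis. Finally `ρ ≤ λ_min(Q) / (2 λ_max(P))` makes the total coefficient
nonpositive.
-/

open Matrix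
open scoped RealInnerProductSpace

namespace Matrix

variable {m n : Type*} [Fintype m] [Fintype n] [DecidableEq m] [DecidableEq n]

theorem inner_toEuclideanLin_right (B : Matrix m n ℝ) (u : EuclideanSpace ℝ m)
    (v : EuclideanSpace ℝ n) :
    ⟪u, toEuclideanLin B v⟫ = ⟪toEuclideanLin Bᵀ u, v⟫ := by
  rw [← conjTranspose_eq_transpose_of_trivial, toEuclideanLin_conjTranspose_eq_adjoint,
    LinearMap.adjoint_inner_left]

theorem inner_toEuclideanLin_mul_add_transpose_mul {P : Matrix n n ℝ} (hP : P.IsSymm)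
    (A : Matrix n n ℝ) (x : EuclideanSpace ℝ n) :
    ⟪x, toEuclideanLin (P * A + Aᵀ * P) x⟫ = 2 * ⟪toEuclideanLin P x, toEuclideanLin A x⟫ := by
  rw [map_add, LinearMap.add_apply, inner_add_right, toLpLin_mul_same, toLpLin_mul_same,
    LinearMap.comp_apply, LinearMap.comp_apply, inner_toEuclideanLin_right P,
    inner_toEuclideanLin_right Aᵀ, hP.eq, transpose_transpose, real_inner_comm (toEuclideanLin A x)]
  ring

namespace IsHermitian

variable {M : Matrix n n ℝ} (hM : M.IsHermitian)

theorem inner_eigenvectorBasis_toEuclideanLin (i : n) (x : EuclideanSpace ℝ n) :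
    ⟪hM.eigenvectorBasis i, toEuclideanLin M x⟫ =
      hM.eigenvalues i * ⟪hM.eigenvectorBasis i, x⟫ := by
  have hMi : toEuclideanLin M (hM.eigenvectorBasis i) = hM.eigenvalues i • hM.eigenvectorBasis i :=
    WithLp.ofLp_injective _ (hM.mulVec_eigenvectorBasis i)
  rw [inner_toEuclideanLin_right, (isHermitian_iff_isSymm.mp hM).eq, hMi, real_inner_smul_left]

theorem inner_toEuclideanLin_self (x : EuclideanSpace ℝ n) :
    ⟪x, toEuclideanLin M x⟫ = ∑ i, hM.eigenvalues i * ⟪hM.eigenvectorBasis i, x⟫ ^ 2 := by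
  rw [← hM.eigenvectorBasis.sum_inner_mul_inner]
  refine Finset.sum_congr rfl fun i _ ↦ ?_
  rw [inner_eigenvectorBasis_toEuclideanLin, real_inner_comm x]
  ring

theorem norm_toEuclideanLin_sq (x : EuclideanSpace ℝ n) :
    ‖toEuclideanLin M x‖ ^ 2 = ∑ i, (hM.eigenvalues i * ⟪hM.eigenvectorBasis i, x⟫) ^ 2 := by
  simp only [← hM.eigenvectorBasis.sum_sq_inner_right, inner_eigenvectorBasis_toEuclideanLin]

theorem iInf_eigenvalues_mul_norm_sq_le (x : EuclideanSpace ℝ n) :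
    (⨅ i, hM.eigenvalues i) * ‖x‖ ^ 2 ≤ ⟪x, toEuclideanLin M x⟫ := by
  rw [hM.inner_toEuclideanLin_self, ← hM.eigenvectorBasis.sum_sq_inner_right, Finset.mul_sum]
  gcongr with i
  exact ciInf_le (Set.finite_range _).bddBelow i

end IsHermitian

theorem PosSemidef.norm_toEuclideanLin_le {M : Matrix n n ℝ} (hM : M.PosSemidef)
    (x : EuclideanSpace ℝ n) :
    ‖toEuclideanLin M x‖ ≤ (⨆ i, hM.1.eigenvalues i) * ‖x‖ := by
  have hsup : 0 ≤ ⨆ i, hM.1.eigenvalues i := Real.iSup_nonneg hM.eigenvalues_nonneg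
  refine le_of_sq_le_sq ?_ (by positivity)
  rw [hM.1.norm_toEuclideanLin_sq, mul_pow, ← hM.1.eigenvectorBasis.sum_sq_inner_right,
    Finset.mul_sum]
  gcongr with i
  rw [mul_pow]
  gcongr
  · exact hM.eigenvalues_nonneg i
  · exact le_ciSup (Set.finite_range _).bddAbove i

end Matrix

theorem lyapunov_derivative_nonpos_general (n : ℕ)
    (A P Q : Matrix (Fin n) (Fin n) ℝ)
    (hP : P.PosDef) (hQ : Q.PosDef)
    (hLyap : P * A + Aᵀ * P = -Q)
    (f : EuclideanSpace ℝ (Fin n) → EuclideanSpace ℝ (Fin n))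
    (ρ : ℝ)
    (hLip : ∀ x y : EuclideanSpace ℝ (Fin n), ‖f x - f y‖ ≤ ρ * ‖x - y‖)
    (hf0 : f 0 = 0)
    (hρ : ρ ≤ (⨅ i, hQ.1.eigenvalues i) / (2 * ⨆ i, hP.1.eigenvalues i)) :
    ∀ x : EuclideanSpace ℝ (Fin n),
      2 * ⟪Matrix.toEuclideanLin P x, Matrix.toEuclideanLin A x + f x⟫ ≤
          -((⨅ i, hQ.1.eigenvalues i) - 2 * ρ * ⨆ i, hP.1.eigenvalues i) * ‖x‖ ^ 2 ∧
      -((⨅ i, hQ.1.eigenvalues i) - 2 * ρ * ⨆ i, hP.1.eigenvalues i) * ‖x‖ ^ 2 ≤ 0 := by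
  intro x
  set μQ := ⨅ i, hQ.1.eigenvalues i
  set μP := ⨆ i, hP.1.eigenvalues i
  have hμP : 0 ≤ μP := Real.iSup_nonneg hP.posSemidef.eigenvalues_nonneg
  have hρμ : ρ * (2 * μP) ≤ μQ :=
    mul_le_of_le_div₀ (Real.iInf_nonneg hQ.posSemidef.eigenvalues_nonneg) (by positivity) hρ
  have hAx : 2 * ⟪toEuclideanLin P x, toEuclideanLin A x⟫ = -⟪x, toEuclideanLin Q x⟫ := by
    rw [← inner_toEuclideanLin_mul_add_transpose_mul (isHermitian_iff_isSymm.mp hP.1), hLyap,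
      map_neg, LinearMap.neg_apply, inner_neg_right]
  have hfx : ‖f x‖ ≤ ρ * ‖x‖ := by simpa [hf0] using hLip x 0
  have hPfx : ⟪toEuclideanLin P x, f x⟫ ≤ μP * ‖x‖ * (ρ * ‖x‖) :=
    (real_inner_le_norm _ _).trans <|
      mul_le_mul (hP.posSemidef.norm_toEuclideanLin_le x) hfx (norm_nonneg _) (by positivity)
  have hQx := hQ.1.iInf_eigenvalues_mul_norm_sq_le x
  constructor
  · rw [inner_add_right]
    linarith
  · exact mul_nonpos_of_nonpos_of_nonneg (by linarith) (sq_nonneg _)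

/-- Lyapunov stability condition: if `P A + Aᵀ P = −Q` with `P, Q` symmetric
positive definite, `f` is `ρ`-Lipschitz with `f 0 = 0`, and
`ρ ≤ λ_min(Q) / (2 λ_max(P))`, then the derivative of `V(x) = ⟨x, P x⟩` along
the vector field `x ↦ A x + f x` satisfies
`2⟨P x, A x + f x⟩ ≤ −(λ_min(Q) − 2 ρ λ_max(P)) ‖x‖² ≤ 0`. -/
theorem lyapunov_derivative_nonpos (n : ℕ) (hn : 0 < n)
    (A P Q : Matrix (Fin n) (Fin n) ℝ)
    (hP : P.PosDef) (hQ : Q.PosDef)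
    (hLyap : P * A + Aᵀ * P = -Q)
    (f : EuclideanSpace ℝ (Fin n) → EuclideanSpace ℝ (Fin n))
    (ρ : ℝ) (hρ0 : 0 ≤ ρ)
    (hLip : ∀ x y : EuclideanSpace ℝ (Fin n), ‖f x - f y‖ ≤ ρ * ‖x - y‖)
    (hf0 : f 0 = 0)
    (hρ : ρ ≤ (⨅ i, hQ.1.eigenvalues i) / (2 * ⨆ i, hP.1.eigenvalues i)) :
    ∀ x : EuclideanSpace ℝ (Fin n),
      2 * ⟪Matrix.toEuclideanLin P x, Matrix.toEuclideanLin A x + f x⟫ ≤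
          -((⨅ i, hQ.1.eigenvalues i) - 2 * ρ * ⨆ i, hP.1.eigenvalues i) * ‖x‖ ^ 2 ∧
      -((⨅ i, hQ.1.eigenvalues i) - 2 * ρ * ⨆ i, hP.1.eigenvalues i) * ‖x‖ ^ 2 ≤ 0 :=
  lyapunov_derivative_nonpos_general n A P Q hP hQ hLyap f ρ hLip hf0 hρ
end

section
/- Let A, P, Q be n × n real matrices with P and Q symmetric positive definite, satisfying P A + Aᵀ P = −Q. Let f : ℝ^n → ℝ^n be Lipschitz with constant ρ ≥ 0 with f(0) = 0 and ρ ≤ λ_min(Q) / (2 λ_max(P)). Let x : ℝ → ℝ^n be differentiable with x′(t) = A x(t) + f(x(t)) for all t. Then the Lyapunov function along the trajectory, t ↦ ⟨x(t), P x(t)⟩, is non-increasing (antitone) on ℝ, where ⟨·,·⟩ is the Euclidean inner product on ℝ^n. -/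
open Matrix
open scoped RealInnerProductSpace

/-!
Along a trajectory, `d/dt ⟨x, P x⟩ = 2 ⟨ẋ, P x⟩ = -⟨x, Q x⟩ + 2 ⟨f x, P x⟩` by the
Lyapunov equation. Expanding in orthonormal eigenbases, `⟨x, Q x⟩ ≥ λ_min(Q) ‖x‖²` and
`‖P y‖ ≤ λ_max(P) ‖y‖`, while `‖f x‖ ≤ ρ ‖x‖` since `f 0 = 0`; so the derivative is at most
`(2 ρ λ_max(P) - λ_min(Q)) ‖x‖² ≤ 0`.
-/

namespace Matrix

variable {ι : Type*} [Fintype ι] [DecidableEq ι] {A : Matrix ι ι ℝ}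

theorem IsHermitian.inner_eigenvectorBasis_toEuclideanLin_s11 (hA : A.IsHermitian)
    (j : ι) (y : EuclideanSpace ℝ ι) :
    ⟪hA.eigenvectorBasis j, toEuclideanLin A y⟫ =
      hA.eigenvalues j * ⟪hA.eigenvectorBasis j, y⟫ := by
  have hev :
      toEuclideanLin A (hA.eigenvectorBasis j) = hA.eigenvalues j • hA.eigenvectorBasis j :=
    WithLp.ofLp_injective 2 (hA.mulVec_eigenvectorBasis j)
  rw [← isSymmetric_toEuclideanLin_iff.mpr hA, hev, real_inner_smul_left]

theorem IsHermitian.inner_toEuclideanLin_self_s11 (hA : A.IsHermitian) (y : EuclideanSpace ℝ ι) :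
    ⟪y, toEuclideanLin A y⟫ = ∑ j, hA.eigenvalues j * ⟪hA.eigenvectorBasis j, y⟫ ^ 2 := by
  rw [← hA.eigenvectorBasis.sum_inner_mul_inner]
  simp only [hA.inner_eigenvectorBasis_toEuclideanLin_s11, real_inner_comm y]
  exact Finset.sum_congr rfl fun j _ => by ring

theorem IsHermitian.iInf_eigenvalues_mul_norm_sq_le_s11 (hA : A.IsHermitian)
    (y : EuclideanSpace ℝ ι) :
    (⨅ i, hA.eigenvalues i) * ‖y‖ ^ 2 ≤ ⟪y, toEuclideanLin A y⟫ := by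
  rw [hA.inner_toEuclideanLin_self_s11, ← hA.eigenvectorBasis.sum_sq_inner_right, Finset.mul_sum]
  gcongr with j
  exact ciInf_le (Set.finite_range _).bddBelow j

theorem PosSemidef.norm_toEuclideanLin_le_s11 (hA : A.PosSemidef) (y : EuclideanSpace ℝ ι) :
    ‖toEuclideanLin A y‖ ≤ (⨆ i, hA.1.eigenvalues i) * ‖y‖ := by
  have hsup : 0 ≤ ⨆ i, hA.1.eigenvalues i := Real.iSup_nonneg hA.eigenvalues_nonneg
  refine le_of_pow_le_pow_left₀ two_ne_zero (by positivity) ?_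
  rw [mul_pow, ← hA.1.eigenvectorBasis.sum_sq_inner_right,
    ← hA.1.eigenvectorBasis.sum_sq_inner_right, Finset.mul_sum]
  gcongr with j
  rw [hA.1.inner_eigenvectorBasis_toEuclideanLin_s11, mul_pow]
  gcongr
  · exact hA.eigenvalues_nonneg j
  · exact le_ciSup (Set.finite_range _).bddAbove j

theorem two_mul_inner_toEuclideanLin_of_lyapunov {A P Q : Matrix ι ι ℝ} (hP : P.IsHermitian)
    (hLyap : P * A + Aᵀ * P = -Q) (u : EuclideanSpace ℝ ι) :
    2 * ⟪toEuclideanLin A u, toEuclideanLin P u⟫ = -⟪u, toEuclideanLin Q u⟫ := by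
  have hadj : ⟪u, toEuclideanLin Aᵀ (toEuclideanLin P u)⟫ =
      ⟪toEuclideanLin A u, toEuclideanLin P u⟫ := by
    rw [← conjTranspose_eq_transpose_of_trivial, toEuclideanLin_conjTranspose_eq_adjoint,
      LinearMap.adjoint_inner_right]
  have hQ : Q = -(P * A + Aᵀ * P) := by rw [hLyap, neg_neg]
  rw [hQ, map_neg, LinearMap.neg_apply, inner_neg_right, neg_neg, map_add, LinearMap.add_apply,
    toLpLin_mul_same, toLpLin_mul_same, LinearMap.comp_apply, LinearMap.comp_apply,
    inner_add_right, hadj, ← isSymmetric_toEuclideanLin_iff.mpr hP, real_inner_comm, two_mul]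

end Matrix

theorem LinearMap.IsSymmetric.hasDerivAt_inner_apply_self {E : Type*} [NormedAddCommGroup E]
    [InnerProductSpace ℝ E] [FiniteDimensional ℝ E] {T : E →ₗ[ℝ] E} (hT : T.IsSymmetric)
    {x : ℝ → E} {x' : E} {t : ℝ} (hx : HasDerivAt x x' t) :
    HasDerivAt (fun s => ⟪x s, T (x s)⟫) (2 * ⟪x', T (x t)⟫) t := by
  have hTx : HasDerivAt (fun s => T (x s)) (T x') t :=
    (LinearMap.toContinuousLinearMap T).hasFDerivAt.comp_hasDerivAt t hx
  refine (hx.inner ℝ hTx).congr_deriv ?_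
  rw [two_mul, ← hT, real_inner_comm]

theorem lyapunov_function_antitone_general (n : ℕ)
    (A P Q : Matrix (Fin n) (Fin n) ℝ)
    (hP : P.PosDef) (hQ : Q.PosDef)
    (hLyap : P * A + Aᵀ * P = -Q)
    (f : EuclideanSpace ℝ (Fin n) → EuclideanSpace ℝ (Fin n))
    (ρ : ℝ)
    (hLip : ∀ x y : EuclideanSpace ℝ (Fin n), ‖f x - f y‖ ≤ ρ * ‖x - y‖)
    (hf0 : f 0 = 0)
    (hρ : ρ ≤ (⨅ i, hQ.1.eigenvalues i) / (2 * ⨆ i, hP.1.eigenvalues i))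
    (x : ℝ → EuclideanSpace ℝ (Fin n))
    (hx : ∀ t : ℝ, HasDerivAt x (Matrix.toEuclideanLin A (x t) + f (x t)) t) :
    Antitone fun t : ℝ => ⟪x t, Matrix.toEuclideanLin P (x t)⟫ := by
  set m := ⨅ i, hQ.1.eigenvalues i
  set M := ⨆ i, hP.1.eigenvalues i
  have hM : 0 ≤ M := Real.iSup_nonneg fun i => (hP.eigenvalues_pos i).le
  have hρM : ρ * (2 * M) ≤ m :=
    mul_le_of_le_div₀ (Real.iInf_nonneg fun i => (hQ.eigenvalues_pos i).le) (by positivity) hρ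
  refine antitone_of_hasDerivAt_nonpos
    (fun t => (isSymmetric_toEuclideanLin_iff.mpr hP.1).hasDerivAt_inner_apply_self (hx t))
    fun t => ?_
  set u := x t
  have hfu : ‖f u‖ ≤ ρ * ‖u‖ := by simpa [hf0] using hLip u 0
  calc 2 * ⟪toEuclideanLin A u + f u, toEuclideanLin P u⟫
      = -⟪u, toEuclideanLin Q u⟫ + 2 * ⟪f u, toEuclideanLin P u⟫ := by
        rw [inner_add_left, mul_add, two_mul_inner_toEuclideanLin_of_lyapunov hP.1 hLyap]
    _ ≤ -(m * ‖u‖ ^ 2) + 2 * (‖f u‖ * (M * ‖u‖)) := by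
        gcongr
        · exact hQ.1.iInf_eigenvalues_mul_norm_sq_le_s11 u
        · exact (real_inner_le_norm _ _).trans
            (mul_le_mul_of_nonneg_left (hP.posSemidef.norm_toEuclideanLin_le_s11 u) (norm_nonneg _))
    _ ≤ -(m * ‖u‖ ^ 2) + 2 * (ρ * ‖u‖ * (M * ‖u‖)) := by gcongr
    _ = (ρ * (2 * M) - m) * ‖u‖ ^ 2 := by ring
    _ ≤ 0 := mul_nonpos_of_nonpos_of_nonneg (by linarith) (sq_nonneg _)

/-- Lyapunov's direct method: if `P A + Aᵀ P = −Q` with `P, Q` symmetric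
positive definite, `f` is `ρ`-Lipschitz with `f 0 = 0` and
`ρ ≤ λ_min(Q) / (2 λ_max(P))`, then along every differentiable trajectory of
`ẋ = A x + f(x)` the Lyapunov function `t ↦ ⟨x(t), P x(t)⟩` is non-increasing. -/
theorem lyapunov_function_antitone (n : ℕ) (hn : 0 < n)
    (A P Q : Matrix (Fin n) (Fin n) ℝ)
    (hP : P.PosDef) (hQ : Q.PosDef)
    (hLyap : P * A + Aᵀ * P = -Q)
    (f : EuclideanSpace ℝ (Fin n) → EuclideanSpace ℝ (Fin n))
    (ρ : ℝ) (hρ0 : 0 ≤ ρ)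
    (hLip : ∀ x y : EuclideanSpace ℝ (Fin n), ‖f x - f y‖ ≤ ρ * ‖x - y‖)
    (hf0 : f 0 = 0)
    (hρ : ρ ≤ (⨅ i, hQ.1.eigenvalues i) / (2 * ⨆ i, hP.1.eigenvalues i))
    (x : ℝ → EuclideanSpace ℝ (Fin n))
    (hx : ∀ t : ℝ, HasDerivAt x (Matrix.toEuclideanLin A (x t) + f (x t)) t) :
    Antitone fun t : ℝ => ⟪x t, Matrix.toEuclideanLin P (x t)⟫ :=
  lyapunov_function_antitone_general n A P Q hP hQ hLyap f ρ hLip hf0 hρ x hx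
end
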